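/- (Bernstein–Walsh lemma) Let E ⊂ ℂ be compact with positive logarithmic capacity and Green's function g(z,∞) for the unbounded component Ω of ℂ∖E. If p is a polynomial of degree at most n with ‖p‖_E := max_{x∈E}|p(x)| ≤ M, then |p(z)| ≤ M·e^{n·g(z,∞)} for all z ∈ Ω. -/

import Mathlib

/-!
For `α > n` the function `|p| e^{-α g}` is, near each point of `Ω`, the modulus of the holomorphic
function `p e^{-α f}` with `Re f = g`, so it satisfies the maximum principle on the connected
set `Ω`. Since `g = log |z| + O(1)` and `deg p ≤ n < α`, it tends to `0` at `∞`, while at the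
boundary of `Ω`, which lies in `E`, its limits are `|p| ≤ M`. Hence `|p| ≤ M e^{α g}` on `Ω`,
and `α ↓ n` gives the claim.
-/

/-- `g` is harmonic on `Ω`: locally the real part of an analytic function. -/
def IsHarmonicOn (g : ℂ → ℝ) (Ω : Set ℂ) : Prop :=
  ∀ z ∈ Ω, ∃ (U : Set ℂ) (f : ℂ → ℂ), IsOpen U ∧ z ∈ U ∧ U ⊆ Ω ∧
    DifferentiableOn ℂ f U ∧ ∀ w ∈ U, g w = (f w).re

open Filter Set Topology Bornology Asymptotics Real

theorem frontier_connectedComponentIn_subset {X : Type*} [TopologicalSpace X]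
    [LocallyConnectedSpace X] {U : Set X} (hU : IsOpen U) (x : X) :
    frontier (connectedComponentIn U x) ⊆ Uᶜ := by
  intro ξ hξ hξU
  rw [hU.connectedComponentIn.frontier_eq] at hξ
  obtain ⟨y, hyξ, hyx⟩ :=
    mem_closure_iff.1 hξ.1 _ hU.connectedComponentIn (mem_connectedComponentIn hξU)
  apply hξ.2
  rw [connectedComponentIn_eq hyx, ← connectedComponentIn_eq hyξ]
  exact mem_connectedComponentIn hξU

def IsLocallyHolomorphicNorm (h : ℂ → ℝ) (Ω : Set ℂ) : Prop :=
  ∀ z ∈ Ω, ∃ F : ℂ → ℂ, (∀ᶠ w in 𝓝 z, DifferentiableAt ℂ F w) ∧ h =ᶠ[𝓝 z] fun w ↦ ‖F w‖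

theorem IsHarmonicOn.isLocallyHolomorphicNorm_mul_exp {g : ℂ → ℝ} {Ω : Set ℂ}
    (hg : IsHarmonicOn g Ω) {F : ℂ → ℂ} (hF : Differentiable ℂ F) (c : ℝ) :
    IsLocallyHolomorphicNorm (fun z ↦ ‖F z‖ * exp (c * g z)) Ω := by
  intro z hz
  obtain ⟨U, f, hU, hzU, -, hf, hgf⟩ := hg z hz
  refine ⟨fun w ↦ F w * Complex.exp (c * f w), ?_, ?_⟩
  · filter_upwards [hU.mem_nhds hzU] with w hw
    exact (hF w).mul (((hf.differentiableAt (hU.mem_nhds hw)).const_mul _).cexp)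
  · filter_upwards [hU.mem_nhds hzU] with w hw
    simp [Complex.norm_exp, hgf w hw]

namespace IsLocallyHolomorphicNorm

variable {h : ℂ → ℝ} {Ω : Set ℂ}

theorem continuousOn (hh : IsLocallyHolomorphicNorm h Ω) : ContinuousOn h Ω := fun z hz ↦ by
  obtain ⟨F, hF, hhF⟩ := hh z hz
  exact (hF.self_of_nhds.continuousAt.norm.congr hhF.symm).continuousWithinAt

theorem eventually_eq_of_isLocalMax (hh : IsLocallyHolomorphicNorm h Ω) {z : ℂ} (hz : z ∈ Ω)
    (hmax : IsLocalMax h z) : ∀ᶠ w in 𝓝 z, h w = h z := by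
  obtain ⟨F, hF, hhF⟩ := hh z hz
  filter_upwards [Complex.eventually_eq_of_isLocalMax_norm hF (hmax.congr hhF), hhF]
    with w hFw hhw
  rw [hhw, hFw, hhF.self_of_nhds]

theorem eqOn_of_isMaxOn (hh : IsLocallyHolomorphicNorm h Ω) (hΩ : IsOpen Ω)
    (hpre : IsPreconnected Ω) {c : ℂ} (hc : c ∈ Ω) (hmax : IsMaxOn h Ω c) :
    EqOn h (fun _ ↦ h c) Ω := by
  set A := {z ∈ Ω | h z = h c}
  have hA : IsOpen A := isOpen_iff_mem_nhds.2 fun z ⟨hz, hzc⟩ ↦ by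
    have hzmax : IsLocalMax h z :=
      mem_of_superset (hΩ.mem_nhds hz) fun w hw ↦ hzc ▸ hmax hw
    filter_upwards [hΩ.mem_nhds hz, hh.eventually_eq_of_isLocalMax hz hzmax] with w hw hwz
    exact ⟨hw, hwz.trans hzc⟩
  have hAcl : closure A ∩ Ω ⊆ A := fun z ⟨hzA, hz⟩ ↦ by
    have hhz := ((hh.continuousOn z hz).mono (sep_subset _ _)).mem_closure_image hzA
    have hhA : h '' A ⊆ {h c} := image_subset_iff.2 fun w hw ↦ hw.2
    exact ⟨hz, by simpa using closure_mono hhA hhz⟩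
  exact fun z hz ↦ (hpre.subset_of_closure_inter_subset hA ⟨c, hc, hc, rfl⟩ hAcl hz).2

theorem lt_of_frontier_of_cobounded (hh : IsLocallyHolomorphicNorm h Ω) (hΩ : IsOpen Ω)
    (hpre : IsPreconnected Ω) (hunb : ¬IsBounded Ω) {m : ℝ}
    (hinf : ∀ᶠ z in cobounded ℂ ⊓ 𝓟 Ω, h z < m)
    (hbdry : ∀ ξ ∈ frontier Ω, ∀ᶠ z in 𝓝[Ω] ξ, h z < m) :
    ∀ z ∈ Ω, h z < m := by
  set S := {z ∈ Ω | m ≤ h z}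
  have hSb : IsBounded S := by
    rw [isBounded_def]
    filter_upwards [eventually_inf_principal.1 hinf] with z hz hzS
    exact (hz hzS.1).not_ge hzS.2
  have hSΩ : closure S ⊆ Ω := by
    intro ξ hξ
    by_contra hξΩ
    have hfr : ξ ∈ frontier Ω := by
      rw [hΩ.frontier_eq]
      exact ⟨closure_mono (sep_subset _ _) hξ, hξΩ⟩
    obtain ⟨z, hz, hzS⟩ :=
      mem_closure_iff_nhds.1 hξ _ (eventually_nhdsWithin_iff.1 (hbdry ξ hfr))
    exact (hz hzS.1).not_ge hzS.2
  by_contra! hcon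
  obtain ⟨z₀, hz₀, hz₀m⟩ := hcon
  have hz₀S : z₀ ∈ closure S := subset_closure ⟨hz₀, hz₀m⟩
  obtain ⟨c, hcS, hmax⟩ :=
    hSb.isCompact_closure.exists_isMaxOn ⟨z₀, hz₀S⟩ (hh.continuousOn.mono hSΩ)
  have hmc : m ≤ h c := hz₀m.trans (hmax hz₀S)
  have hmaxΩ : IsMaxOn h Ω c := fun z hz ↦
    (le_or_gt m (h z)).elim (fun hzm ↦ hmax (subset_closure ⟨hz, hzm⟩)) fun hzm ↦ hzm.le.trans hmc
  have hΩS : Ω ⊆ S := fun z hz ↦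
    ⟨hz, hmc.trans (hh.eqOn_of_isMaxOn hΩ hpre (hSΩ hcS) hmaxΩ hz).ge⟩
  exact hunb (hSb.subset hΩS)

end IsLocallyHolomorphicNorm

theorem tendsto_norm_eval_mul_exp_cobounded {Ω : Set ℂ} {g : ℂ → ℝ}
    (hgrow : ∃ C R : ℝ, ∀ z ∈ Ω, R ≤ ‖z‖ → |g z - log ‖z‖| ≤ C)
    {n : ℕ} {p : Polynomial ℂ} (hdeg : p.degree ≤ n) {α : ℝ} (hα : n < α) :
    Tendsto (fun z ↦ ‖p.eval z‖ * exp (-α * g z)) (cobounded ℂ ⊓ 𝓟 Ω) (𝓝 0) := by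
  obtain ⟨C, R, hCR⟩ := hgrow
  have hp : (fun z ↦ ‖p.eval z‖) =O[cobounded ℂ] fun z ↦ ‖z‖ ^ (n : ℝ) := by
    have := (Polynomial.isBigO_cobounded_of_degree_le (P := p) (Q := Polynomial.X ^ n)
      (by simpa using hdeg)).norm_left.norm_right
    simpa using this
  have hexp : (fun z ↦ exp (-α * g z)) =O[cobounded ℂ ⊓ 𝓟 Ω] fun z ↦ ‖z‖ ^ (-α) := by
    refine IsBigO.of_bound (exp (α * C)) ?_
    have hlarge : ∀ᶠ z : ℂ in cobounded ℂ, max R 1 ≤ ‖z‖ :=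
      tendsto_norm_cobounded_atTop.eventually_ge_atTop _
    filter_upwards [mem_inf_of_left hlarge, mem_inf_of_right (mem_principal_self Ω)] with z hz hzΩ
    have hz0 : 0 < ‖z‖ := one_pos.trans_le (le_of_max_le_right hz)
    rw [norm_of_nonneg (exp_pos _).le, norm_of_nonneg (rpow_nonneg hz0.le _),
      rpow_def_of_pos hz0, ← exp_add, exp_le_exp]
    have := (abs_le.1 (hCR z hzΩ (le_of_max_le_left hz))).1
    nlinarith
  have hdecay : Tendsto (fun z : ℂ ↦ ‖z‖ ^ ((n : ℝ) - α)) (cobounded ℂ) (𝓝 0) := by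
    simpa [Function.comp_def] using
      (tendsto_rpow_neg_atTop (sub_pos.2 hα)).comp tendsto_norm_cobounded_atTop
  refine ((hp.mono inf_le_left).mul hexp).trans_tendsto ((hdecay.mono_left inf_le_left).congr' ?_)
  filter_upwards [mem_inf_of_left (eventually_ne_cobounded 0)] with z hz
  rw [sub_eq_add_neg, rpow_add (norm_pos_iff.2 hz)]

theorem norm_eval_le_mul_exp_mul_of_lt {Ω : Set ℂ} (hΩ : IsOpen Ω) (hpre : IsPreconnected Ω)
    (hunb : ¬IsBounded Ω) {g : ℂ → ℝ} (hharm : IsHarmonicOn g Ω)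
    (hgrow : ∃ C R : ℝ, ∀ z ∈ Ω, R ≤ ‖z‖ → |g z - log ‖z‖| ≤ C)
    (hbd : ∀ ξ ∈ frontier Ω, Tendsto g (𝓝[Ω] ξ) (𝓝 0))
    {n : ℕ} {p : Polynomial ℂ} (hdeg : p.degree ≤ n) {M : ℝ} (hM₀ : 0 ≤ M)
    (hM : ∀ ξ ∈ frontier Ω, ‖p.eval ξ‖ ≤ M) {α : ℝ} (hα : n < α) :
    ∀ z ∈ Ω, ‖p.eval z‖ ≤ M * exp (α * g z) := by
  intro z hz
  have hbound : ‖p.eval z‖ * exp (-α * g z) ≤ M := by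
    refine le_of_forall_pos_le_add fun δ hδ ↦ le_of_lt ?_
    refine (hharm.isLocallyHolomorphicNorm_mul_exp p.differentiable (-α))
      |>.lt_of_frontier_of_cobounded hΩ hpre hunb ?_ (fun ξ hξ ↦ ?_) z hz
    · exact (tendsto_norm_eval_mul_exp_cobounded hgrow hdeg hα).eventually_lt_const
        (by linarith)
    · have hlim : Tendsto (fun z ↦ ‖p.eval z‖ * exp (-α * g z)) (𝓝[Ω] ξ)
          (𝓝 (‖p.eval ξ‖ * exp (-α * 0))) :=
        ((p.continuous.norm.tendsto ξ).mono_left nhdsWithin_le_nhds).mul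
          ((continuous_exp.tendsto _).comp ((hbd ξ hξ).const_mul (-α)))
      exact hlim.eventually_lt_const <| by
        simpa using (hM ξ hξ).trans_lt (lt_add_of_pos_right M hδ)
  rwa [neg_mul, exp_neg, ← div_eq_mul_inv, div_le_iff₀ (exp_pos _)] at hbound

/-- Bernstein–Walsh lemma: if `g` is the Green's function with pole at infinity of the
unbounded component `Ω` of the complement of a compact `E ⊆ ℂ` (harmonic on `Ω`,
`g - log|z|` bounded near `∞`, boundary values `0`), and `p` is a polynomial of degree
at most `n` with `|p| ≤ M` on `E`, then `|p(z)| ≤ M·e^{n·g(z)}` on `Ω`. -/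
theorem bernstein_walsh (E : Set ℂ) (hE : IsCompact E) (hEne : E.Nonempty)
    (Ω : Set ℂ) (hΩ : ∃ z₀ ∈ Eᶜ, Ω = connectedComponentIn Eᶜ z₀)
    (hΩunb : ¬ Bornology.IsBounded Ω)
    (g : ℂ → ℝ) (hharm : IsHarmonicOn g Ω)
    (hgrow : ∃ C R : ℝ, ∀ z ∈ Ω, R ≤ ‖z‖ →
      |g z - Real.log (‖z‖)| ≤ C)
    (hbd : ∀ ξ ∈ frontier Ω, Filter.Tendsto g (nhdsWithin ξ Ω) (nhds 0))
    (n : ℕ) (p : Polynomial ℂ) (hdeg : p.degree ≤ n)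
    (M : ℝ) (hM : ∀ x ∈ E, ‖p.eval x‖ ≤ M) :
    ∀ z ∈ Ω, ‖p.eval z‖ ≤ M * Real.exp (n * g z) := by
  obtain ⟨z₀, -, rfl⟩ := hΩ
  have hEc : IsOpen Eᶜ := hE.isClosed.isOpen_compl
  have hfront : frontier (connectedComponentIn Eᶜ z₀) ⊆ E := by
    simpa using frontier_connectedComponentIn_subset hEc z₀
  have hM₀ : 0 ≤ M := (norm_nonneg _).trans (hM _ hEne.some_mem)
  intro z hz
  have hcont : Continuous fun α : ℝ ↦ M * exp (α * g z) := by fun_prop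
  exact ge_of_tendsto ((hcont.tendsto _).mono_left nhdsWithin_le_nhds)
    (eventually_nhdsWithin_of_forall (s := Ioi (n : ℝ)) fun α hα ↦
      norm_eval_le_mul_exp_mul_of_lt hEc.connectedComponentIn isPreconnected_connectedComponentIn
        hΩunb hharm hgrow hbd hdeg hM₀ (fun ξ hξ ↦ hM ξ (hfront hξ)) hα z hz)
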